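/- Let R = ⟨A, S, R, D, γ⟩ be an RDP whose dynamics are represented by a finite transducer T = ⟨Q, q₀, S, τ, θ⟩, and let M be its ideal MDP. Let π' be a stationary policy for M, and define the policy π for R by π(·|h) = π'(·|τ(q₀,h)). Then V_π(h) = V^M_{π'}(τ(q₀, h)) for every history h ∈ S*. -/

import Mathlib

/-- Extension of a deterministic transition function to strings (histories). -/
def tauStar {Q S : Type*} (τ : Q → S → Q) : Q → List S → Q
  | q, [] => q
  | q, s :: h => tauStar τ (τ q s) h

theorem tauStar_append {Q S : Type*} (τ : Q → S → Q) (q : Q) (h : List S) (s : S) :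
    tauStar τ q (h ++ [s]) = τ (tauStar τ q h) s := by
  induction h generalizing q with
  | nil => rfl
  | cons x t ih => simp [tauStar, ih]

/-- For an RDP whose dynamics are represented by a finite transducer
`⟨Q, q₀, S, τ, θ⟩` with ideal MDP `M`, if `π'` is a stationary policy for `M` and
`π(·|h) = π'(·|τ(q₀,h))`, then `V_π(h) = V^M_{π'}(τ(q₀, h))` for every history `h`. -/
theorem rdp_policy_value_eq_ideal_mdp_policy_value
    {A S Q R : Type*} [Fintype A] [Nonempty A] [Fintype S] [Nonempty S]
    [Fintype Q] [Fintype R] [DecidableEq Q]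
    -- rewards: finite set of non-negative reals
    (rval : R → ℝ) (hrval : ∀ r, 0 ≤ rval r)
    -- discount factor
    (γ : ℝ) (hγ0 : 0 < γ) (hγ1 : γ < 1)
    -- dynamics function: a probability distribution on S × R for every history and action
    (D : List S → A → S → R → ℝ)
    (hD0 : ∀ h a s r, 0 ≤ D h a s r)
    (hD1 : ∀ h a, (∑ s : S, ∑ r : R, D h a s r) = 1)
    -- transducer representing the dynamics
    (q₀ : Q) (τ : Q → S → Q) (θ : Q → A → S → R → ℝ)
    (hrep : ∀ h a s r, D h a s r = θ (tauStar τ q₀ h) a s r)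
    -- stationary policy π' on the ideal MDP
    (π' : Q → A → ℝ)
    (hπ'0 : ∀ q a, 0 ≤ π' q a) (hπ'1 : ∀ q, (∑ a : A, π' q a) = 1)
    -- the policy π on the RDP defined by π(·|h) = π'(·|τ(q₀,h))
    (π : List S → A → ℝ)
    (hπ : ∀ h a, π h a = π' (tauStar τ q₀ h) a)
    -- value of π on the RDP: the unique bounded solution of its Bellman equation
    (Vπ : List S → ℝ)
    (hVπbdd : ∃ C : ℝ, ∀ h, |Vπ h| ≤ C)
    (hVπ : ∀ h : List S, Vπ h = ∑ a : A, ∑ s : S, ∑ r : R,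
      π h a * D h a s r * (rval r + γ * Vπ (h ++ [s])))
    -- value of π' on the ideal MDP: the unique solution of its Bellman equation,
    -- where D^M(q',r|q,a) = ∑_{s : τ(q,s) = q'} θ(q)(a,s,r)
    (VMπ' : Q → ℝ)
    (hVMπ' : ∀ q : Q, VMπ' q = ∑ a : A, ∑ q' : Q, ∑ r : R,
      π' q a * (∑ s : S, if τ q s = q' then θ q a s r else 0) * (rval r + γ * VMπ' q')) :
    ∀ h : List S, Vπ h = VMπ' (tauStar τ q₀ h) := by
  classical
  haveI : Nonempty Q := ⟨q₀⟩
  obtain ⟨C, hC⟩ := hVπbdd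
  set C2 : ℝ := Finset.univ.sup' Finset.univ_nonempty (fun q => |VMπ' q|) with hC2def
  have hC2 : ∀ q, |VMπ' q| ≤ C2 := fun q =>
    Finset.le_sup' (fun q => |VMπ' q|) (Finset.mem_univ q)
  set K : ℝ := C + C2 with hK
  have hC0 : 0 ≤ C := le_trans (abs_nonneg _) (hC [])
  have hC20 : 0 ≤ C2 := le_trans (abs_nonneg _) (hC2 q₀)
  have hK0 : 0 ≤ K := add_nonneg hC0 hC20
  -- Bellman equation for VMπ' in "state-sum" form
  have hVM' : ∀ q : Q, VMπ' q = ∑ a : A, ∑ s : S, ∑ r : R,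
      π' q a * θ q a s r * (rval r + γ * VMπ' (τ q s)) := by
    intro q
    rw [hVMπ' q]
    refine Finset.sum_congr rfl (fun a _ => ?_)
    conv_lhs => rw [Finset.sum_comm]
    conv_rhs => rw [Finset.sum_comm]
    refine Finset.sum_congr rfl (fun r _ => ?_)
    calc ∑ q' : Q, π' q a * (∑ s : S, if τ q s = q' then θ q a s r else 0)
            * (rval r + γ * VMπ' q')
        = ∑ q' : Q, ∑ s : S, (if τ q s = q' then
            π' q a * θ q a s r * (rval r + γ * VMπ' q') else 0) := by
          refine Finset.sum_congr rfl (fun q' _ => ?_)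
          rw [Finset.mul_sum, Finset.sum_mul]
          refine Finset.sum_congr rfl (fun s _ => ?_)
          by_cases hts : τ q s = q' <;> simp [hts]
      _ = ∑ s : S, ∑ q' : Q, (if τ q s = q' then
            π' q a * θ q a s r * (rval r + γ * VMπ' q') else 0) := Finset.sum_comm
      _ = ∑ s : S, π' q a * θ q a s r * (rval r + γ * VMπ' (τ q s)) := by
          refine Finset.sum_congr rfl (fun s _ => ?_)
          rw [Finset.sum_ite_eq]
          simp
  -- the key contraction estimate
  have key : ∀ n : ℕ, ∀ h : List S, |Vπ h - VMπ' (tauStar τ q₀ h)| ≤ γ ^ n * K := by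
    intro n
    induction n with
    | zero =>
      intro h
      simpa [hK] using abs_sub (Vπ h) (VMπ' (tauStar τ q₀ h)) |>.trans
        (add_le_add (hC h) (hC2 _))
    | succ n ih =>
      intro h
      set q := tauStar τ q₀ h with hq
      have e1 : Vπ h - VMπ' q = γ * ∑ a : A, ∑ s : S, ∑ r : R,
          π' q a * θ q a s r * (Vπ (h ++ [s]) - VMπ' (τ q s)) := by
        rw [hVπ h, hVM' q]
        simp only [hπ, hrep, ← hq]
        rw [← Finset.sum_sub_distrib, Finset.mul_sum]
        refine Finset.sum_congr rfl (fun a _ => ?_)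
        rw [← Finset.sum_sub_distrib, Finset.mul_sum]
        refine Finset.sum_congr rfl (fun s _ => ?_)
        rw [← Finset.sum_sub_distrib, Finset.mul_sum]
        refine Finset.sum_congr rfl (fun r _ => ?_)
        ring
      have hθ0 : ∀ a s r, 0 ≤ θ q a s r := fun a s r => by
        rw [← hrep h a s r]; exact hD0 h a s r
      have hθ1 : ∀ a, (∑ s : S, ∑ r : R, θ q a s r) = 1 := fun a => by
        exact (Finset.sum_congr rfl fun s _ => Finset.sum_congr rfl fun r _ => (hrep h a s r).symm).trans (hD1 h a)
      have hbd : ∀ a s r, |π' q a * θ q a s r * (Vπ (h ++ [s]) - VMπ' (τ q s))|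
          ≤ π' q a * θ q a s r * (γ ^ n * K) := by
        intro a s r
        rw [abs_mul, abs_of_nonneg (mul_nonneg (hπ'0 q a) (hθ0 a s r))]
        refine mul_le_mul_of_nonneg_left ?_ (mul_nonneg (hπ'0 q a) (hθ0 a s r))
        have := ih (h ++ [s])
        rwa [tauStar_append, ← hq] at this
      calc |Vπ h - VMπ' q|
          = γ * |∑ a : A, ∑ s : S, ∑ r : R,
              π' q a * θ q a s r * (Vπ (h ++ [s]) - VMπ' (τ q s))| := by
            rw [e1, abs_mul, abs_of_pos hγ0]
        _ ≤ γ * ∑ a : A, ∑ s : S, ∑ r : R,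
              π' q a * θ q a s r * (γ ^ n * K) := by
            refine mul_le_mul_of_nonneg_left ?_ hγ0.le
            refine (Finset.abs_sum_le_sum_abs _ _).trans ?_
            refine Finset.sum_le_sum (fun a _ => ?_)
            refine (Finset.abs_sum_le_sum_abs _ _).trans ?_
            refine Finset.sum_le_sum (fun s _ => ?_)
            refine (Finset.abs_sum_le_sum_abs _ _).trans ?_
            exact Finset.sum_le_sum (fun r _ => hbd a s r)
        _ = γ ^ (n + 1) * K := by
            have hinner : ∀ a : A, ∑ s : S, ∑ r : R, π' q a * θ q a s r * (γ ^ n * K)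
                = π' q a * (γ ^ n * K) := by
              intro a
              simp only [mul_assoc, ← Finset.mul_sum]
              congr 1
              simp only [← Finset.sum_mul]
              rw [hθ1 a, one_mul]
            have : ∑ a : A, ∑ s : S, ∑ r : R, π' q a * θ q a s r * (γ ^ n * K)
                = γ ^ n * K := by
              simp only [hinner]
              rw [← Finset.sum_mul, hπ'1 q, one_mul]
            rw [this]; ring
  -- conclude by letting n → ∞
  intro h
  have htend : Filter.Tendsto (fun n : ℕ => γ ^ n * K) Filter.atTop (nhds 0) := by
    have := tendsto_pow_atTop_nhds_zero_of_lt_one hγ0.le hγ1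
    simpa using this.mul_const K
  have h0 : |Vπ h - VMπ' (tauStar τ q₀ h)| ≤ 0 :=
    ge_of_tendsto htend (Filter.Eventually.of_forall (fun n => key n h))
  have := abs_nonneg (Vπ h - VMπ' (tauStar τ q₀ h))
  have : Vπ h - VMπ' (tauStar τ q₀ h) = 0 := abs_eq_zero.mp (le_antisymm h0 this)
  linarith
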